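/- arXiv:2407.07928 — 3 statements merged into one kernel-verified Lean document; each statement's English description precedes it below -/
import Mathlib

section
/- Let Σ be a bipartite graph on parts V and W, let A ⊆ V, let M₀ be a matching of Σ saturating A, and let M₁ be a matching of Σ saturating V. Then there is a matching M of Σ saturating V that covers every vertex of W covered by M₀. -/
open Classical in
noncomputable def myT {V W : Type*} (f₀ f₁ : V → W) (a : V) : Option V :=
  if h : ∃ v, f₁ v = f₀ a then some h.choose else none

theorem myT_spec {V W : Type*} (f₀ f₁ : V → W) (a v : V)
    (h : myT f₀ f₁ a = some v) : f₁ v = f₀ a := by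
  unfold myT at h
  split at h
  · rename_i hex
    cases h
    exact hex.choose_spec
  · simp at h

theorem myT_total {V W : Type*} (f₀ f₁ : V → W) (a v : V)
    (h : f₁ v = f₀ a) : myT f₀ f₁ a = some (Exists.intro v h : ∃ u, f₁ u = f₀ a).choose := by
  unfold myT
  rw [dif_pos ⟨v, h⟩]

noncomputable def myTT {V W : Type*} (f₀ f₁ : V → W) (o : Option V) : Option V :=
  o.bind (myT f₀ f₁)

theorem myTT_none {V W : Type*} (f₀ f₁ : V → W) (n : ℕ) :
    (myTT f₀ f₁)^[n] none = none := by
  induction n with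
  | zero => rfl
  | succ n ih => rw [Function.iterate_succ_apply, show myTT f₀ f₁ none = none from rfl, ih]

def myB {V W : Type*} (f₀ f₁ : V → W) (A : Set V) : Set V :=
  {a | a ∈ A ∧ ∀ n b, (myTT f₀ f₁)^[n] (some a) = some b → b ∈ A}

theorem myB_closed {V W : Type*} (f₀ f₁ : V → W) (A : Set V) (b : V)
    (hb : b ∈ myB f₀ f₁ A) (v : V) (hv : myT f₀ f₁ b = some v) : v ∈ myB f₀ f₁ A := by
  constructor
  · exact hb.2 1 v (by simp [Function.iterate_one, myTT, hv])
  · intro n c hc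
    refine hb.2 (n + 1) c ?_
    rw [Function.iterate_succ_apply, show myTT f₀ f₁ (some b) = some v by simp [myTT, hv]]
    exact hc

theorem myB_escape {V W : Type*} (f₀ f₁ : V → W) (A : Set V) (a : V)
    (ha : a ∈ A) (hna : a ∉ myB f₀ f₁ A) :
    ∃ v, myT f₀ f₁ a = some v ∧ v ∉ myB f₀ f₁ A := by
  simp only [myB, Set.mem_setOf_eq, not_and, not_forall] at hna
  obtain ⟨n, b, hnb, hbA⟩ := hna ha
  match n with
  | 0 => simp at hnb; exact absurd (hnb ▸ ha) hbA
  | n + 1 =>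
    rw [Function.iterate_succ_apply] at hnb
    cases hv : myT f₀ f₁ a with
    | none =>
      rw [show myTT f₀ f₁ (some a) = none by simp [myTT, hv], myTT_none] at hnb
      exact absurd hnb (by simp)
    | some v =>
      refine ⟨v, rfl, fun hvB => ?_⟩
      rw [show myTT f₀ f₁ (some a) = some v by simp [myTT, hv]] at hnb
      exact hbA (hvB.2 n b hnb)

/-- Exchange property for bipartite matchings: if `M₀` is a matching saturating
`A ⊆ V` and `M₁` is a matching saturating `V`, then there is a matching
saturating `V` that covers every `W`-vertex covered by `M₀`. -/
theorem stmt_7 {V W : Type*} [Fintype V] [Fintype W]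
    (Adj : V → W → Prop) (A : Set V)
    (f₀ : V → W) (hf₀inj : Set.InjOn f₀ A) (hf₀adj : ∀ a ∈ A, Adj a (f₀ a))
    (f₁ : V → W) (hf₁inj : Function.Injective f₁) (hf₁adj : ∀ v, Adj v (f₁ v)) :
    ∃ f : V → W, Function.Injective f ∧ (∀ v, Adj v (f v)) ∧
      ∀ a ∈ A, f₀ a ∈ Set.range f := by
  classical
  set B := myB f₀ f₁ A with hBdef
  have hBA : ∀ a ∈ B, a ∈ A := fun a h => h.1
  refine ⟨fun v => if v ∈ B then f₀ v else f₁ v, ?_, ?_, ?_⟩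
  · intro u v huv
    simp only at huv
    by_cases hu : u ∈ B <;> by_cases hv : v ∈ B <;>
      simp only [hu, hv, if_pos, if_neg, if_true, if_false] at huv
    · exact hf₀inj (hBA u hu) (hBA v hv) huv
    · -- f₀ u = f₁ v, u ∈ B, v ∉ B: contradiction
      exfalso
      have hsome := myT_total f₀ f₁ u v huv.symm
      have hspec := myT_spec f₀ f₁ u _ hsome
      have : (⟨v, huv.symm⟩ : ∃ w, f₁ w = f₀ u).choose = v := hf₁inj (hspec.trans huv.symm.symm)
      exact hv (this ▸ myB_closed f₀ f₁ A u hu _ hsome)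
    · exfalso
      have hsome := myT_total f₀ f₁ v u huv
      have hspec := myT_spec f₀ f₁ v _ hsome
      have : (⟨u, huv⟩ : ∃ w, f₁ w = f₀ v).choose = u := hf₁inj (hspec.trans huv.symm)
      exact hu (this ▸ myB_closed f₀ f₁ A v hv _ hsome)
    · exact hf₁inj huv
  · intro v
    by_cases hv : v ∈ B
    · simpa [hv] using hf₀adj v (hBA v hv)
    · simpa [hv] using hf₁adj v
  · intro a haA
    by_cases ha : a ∈ B
    · exact ⟨a, by simp [ha]⟩
    · obtain ⟨v, hv, hvB⟩ := myB_escape f₀ f₁ A a haA ha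
      exact ⟨v, by simp [hBdef, hvB, myT_spec f₀ f₁ a v hv]⟩
end

section
/- Let U and Z be disjoint finite sets with |Z| = J + R, J = |U|, and for each v ∈ U let N_v be a uniformly random t_v-subset of a set N_B(v) ⊆ Z with |N_B(v)| = d_B(v), independently over v. Suppose min_v t_v/d_B(v) ≥ q. Then for any Y ⊆ Z of size a, the probability that every y ∈ Y is isolated (i.e., y ∉ N_v for all v ∈ U) is at most (1−q)^{Ja − |B̄|}, where |B̄| = Σ_{v∈U}(|Z| − d_B(v)). -/
lemma stmt11_choose_bound (d t : ℕ) (ht : t ≤ d) : ∀ m : ℕ,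
    (d - m).choose t * d ^ m ≤ d.choose t * (d - t) ^ m := by
  intro m
  induction m with
  | zero => simp
  | succ m ih =>
    by_cases ht0 : t = 0
    · simp [ht0]
    by_cases h : t ≤ d - (m+1)
    · have hdm : 0 < d - m := by omega
      apply Nat.le_of_mul_le_mul_right _ hdm
      have key : (d - (m+1)).choose t * (d - m) = (d - m).choose t * (d - m - t) := by
        have h2 := Nat.choose_mul_succ_eq (d - (m+1)) t
        have e1 : d - (m+1) + 1 = d - m := by omega
        rw [e1] at h2
        exact h2
      have hlin : (d - m - t) * d ≤ (d - t) * (d - m) := by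
        obtain ⟨s, hs⟩ : ∃ s, d = m + 1 + t + s := ⟨d - (m+1) - t, by omega⟩
        subst hs
        have e1 : m + 1 + t + s - m - t = s + 1 := by omega
        have e2 : m + 1 + t + s - t = m + 1 + s := by omega
        have e3 : m + 1 + t + s - m = t + s + 1 := by omega
        rw [e1, e2, e3]
        nlinarith
      calc (d - (m+1)).choose t * d ^ (m+1) * (d - m)
          = ((d - m).choose t * d ^ m) * ((d - m - t) * d) := by
            rw [pow_succ]
            rw [show (d - (m+1)).choose t * (d ^ m * d) * (d - m)
                = ((d - (m+1)).choose t * (d - m)) * (d ^ m * d) by ring, key]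
            ring
        _ ≤ (d.choose t * (d - t) ^ m) * ((d - t) * (d - m)) :=
            Nat.mul_le_mul ih hlin
        _ = d.choose t * (d - t) ^ (m+1) * (d - m) := by ring
    · have : (d - (m+1)).choose t = 0 := Nat.choose_eq_zero_of_lt (by omega)
      simp [this]

lemma stmt11_ratio_le (d t m : ℕ) (ht : t ≤ d) (hm : m ≤ d) (q : ℝ)
    (hq : q ≤ (t : ℝ) / d) :
    ((d - m).choose t : ℝ) / (d.choose t : ℝ) ≤ (1 - q) ^ m := by
  rcases Nat.eq_zero_or_pos d with hd | hd
  · have h1 : t = 0 := by omega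
    have h2 : m = 0 := by omega
    subst hd h1 h2
    simp
  · have hd' : (0:ℝ) < d := by exact_mod_cast hd
    have hc : (0:ℝ) < d.choose t := by exact_mod_cast Nat.choose_pos ht
    have h1 : ((d:ℝ) - t)/d ≤ 1 - q := by
      rw [sub_div, div_self hd'.ne']
      linarith
    have h2 : (0:ℝ) ≤ ((d:ℝ) - t)/d := by
      apply div_nonneg _ hd'.le
      have : (t:ℝ) ≤ d := by exact_mod_cast ht
      linarith
    calc ((d - m).choose t : ℝ) / (d.choose t : ℝ)
        ≤ (((d:ℝ) - t)/d) ^ m := by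
          rw [div_pow, div_le_div_iff₀ hc (by positivity)]
          have hcast : ((d - m).choose t : ℝ) * (d:ℝ) ^ m
              ≤ (d.choose t : ℝ) * ((d - t : ℕ) : ℝ) ^ m := by
            exact_mod_cast stmt11_choose_bound d t ht m
          rw [Nat.cast_sub ht] at hcast
          linarith
      _ ≤ (1 - q) ^ m := pow_le_pow_left₀ h2 h1 m

lemma stmt11_card_pi_filter {U Z : Type*} [Fintype U] [Fintype Z] [DecidableEq U]
    [DecidableEq Z] (P : U → Finset Z → Prop) [∀ v s, Decidable (P v s)] :
    (Finset.univ.filter (fun f : U → Finset Z => ∀ v, P v (f v))).card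
      = ∏ v, (Finset.univ.filter (fun s => P v s)).card := by
  rw [← Fintype.card_subtype]
  rw [Fintype.card_congr (Equiv.subtypePiEquivPi (p := fun v s => P v s))]
  rw [Fintype.card_pi]
  exact Finset.prod_congr rfl fun v _ => Fintype.card_subtype _

lemma stmt11_card_powerset {Z : Type*} [Fintype Z] [DecidableEq Z] (A : Finset Z) (n : ℕ) :
    (Finset.univ.filter (fun s : Finset Z => s ⊆ A ∧ s.card = n)).card
      = A.card.choose n := by
  rw [show (Finset.univ.filter (fun s : Finset Z => s ⊆ A ∧ s.card = n)) = A.powersetCard n by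
    ext s; simp [Finset.mem_powersetCard]]
  exact Finset.card_powersetCard n A

/-- If each `v ∈ U` independently picks a uniform `t_v`-subset `N_v` of
`N_B(v) ⊆ Z` and `t_v/d_B(v) ≥ q` for all `v`, then for `Y ⊆ Z` of size `a`,
the probability that every `y ∈ Y` is isolated is at most `(1-q)^{Ja - |B̄|}`. -/
theorem stmt_11 {U Z : Type*} [Fintype U] [Fintype Z] [DecidableEq U] [DecidableEq Z]
    (NB : U → Finset Z) (t : U → ℕ) (ht : ∀ v, t v ≤ (NB v).card)
    (q : ℝ) (hq0 : 0 ≤ q) (hq1 : q ≤ 1)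
    (hq : ∀ v, q ≤ (t v : ℝ) / ((NB v).card : ℝ))
    (Y : Finset Z) :
    (((Finset.univ.filter (fun f : U → Finset Z =>
          ∀ v, f v ⊆ NB v ∧ (f v).card = t v)).filter
        (fun f => ∀ v, ∀ y ∈ Y, y ∉ f v)).card : ℝ) /
      ((Finset.univ.filter (fun f : U → Finset Z =>
          ∀ v, f v ⊆ NB v ∧ (f v).card = t v)).card : ℝ)
      ≤ (1 - q) ^
          (Fintype.card U * Y.card - ∑ v, (Fintype.card Z - (NB v).card)) := by
  classical
  obtain ⟨m, hm_def⟩ : ∃ m : U → ℕ, ∀ v, m v = (NB v ∩ Y).card := ⟨_, fun _ => rfl⟩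
  have hmle : ∀ v, m v ≤ (NB v).card := fun v => by
    rw [hm_def]; exact Finset.card_le_card Finset.inter_subset_left
  -- Denominator count
  have hD : (Finset.univ.filter (fun f : U → Finset Z =>
        ∀ v, f v ⊆ NB v ∧ (f v).card = t v)).card
      = ∏ v, (NB v).card.choose (t v) := by
    rw [stmt11_card_pi_filter (fun v s => s ⊆ NB v ∧ s.card = t v)]
    exact Finset.prod_congr rfl fun v _ => stmt11_card_powerset (NB v) (t v)
  -- Numerator count
  have hN : ((Finset.univ.filter (fun f : U → Finset Z =>
        ∀ v, f v ⊆ NB v ∧ (f v).card = t v)).filter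
        (fun f => ∀ v, ∀ y ∈ Y, y ∉ f v)).card
      = ∏ v, ((NB v).card - m v).choose (t v) := by
    rw [Finset.filter_filter]
    have heq : (Finset.univ.filter (fun f : U → Finset Z =>
          (∀ v, f v ⊆ NB v ∧ (f v).card = t v) ∧ (∀ v, ∀ y ∈ Y, y ∉ f v)))
        = Finset.univ.filter
            (fun f : U → Finset Z => ∀ v, f v ⊆ NB v \ Y ∧ (f v).card = t v) := by
      ext f
      simp only [Finset.mem_filter, Finset.mem_univ, true_and, Finset.subset_sdiff,
        Finset.disjoint_right]
      constructor
      · rintro ⟨h1, h2⟩ v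
        exact ⟨⟨(h1 v).1, fun a ha => h2 v a ha⟩, (h1 v).2⟩
      · intro h
        exact ⟨fun v => ⟨(h v).1.1, (h v).2⟩, fun v y hy hyf => (h v).1.2 hy hyf⟩
    rw [heq, stmt11_card_pi_filter (fun v s => s ⊆ NB v \ Y ∧ s.card = t v)]
    refine Finset.prod_congr rfl fun v _ => ?_
    rw [stmt11_card_powerset (NB v \ Y) (t v)]
    congr 1
    have h4 := Finset.card_inter_add_card_sdiff (NB v) Y
    have h5 := hm_def v
    clear hD
    omega
  rw [hD, hN]
  push_cast
  rw [← Finset.prod_div_distrib]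
  have step1 : ∏ v, (((NB v).card - m v).choose (t v) : ℝ) / ((NB v).card.choose (t v) : ℝ)
      ≤ ∏ v : U, (1 - q) ^ (m v) := by
    apply Finset.prod_le_prod
    · intro v _
      positivity
    · intro v _
      exact stmt11_ratio_le _ _ _ (ht v) (hmle v) q (hq v)
  have step2 : ∏ v : U, (1 - q) ^ (m v) = (1 - q) ^ (∑ v, m v) := by
    rw [Finset.prod_pow_eq_pow_sum]
  have hE : Fintype.card U * Y.card - ∑ v, (Fintype.card Z - (NB v).card) ≤ ∑ v, m v := by
    clear hD hN
    have hper : ∀ v, Y.card ≤ m v + (Fintype.card Z - (NB v).card) := by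
      intro v
      have h1 := Finset.card_inter_add_card_sdiff Y (NB v)
      have h2 : (Y \ NB v).card ≤ Fintype.card Z - (NB v).card := by
        have hsub : Y \ NB v ⊆ Finset.univ \ NB v := by
          intro x hx
          simp only [Finset.mem_sdiff, Finset.mem_univ, true_and]
          exact (Finset.mem_sdiff.mp hx).2
        have := Finset.card_le_card hsub
        rwa [Finset.card_sdiff_of_subset (Finset.subset_univ _), Finset.card_univ] at this
      have h3 : (Y ∩ NB v).card = m v := by rw [hm_def v, Finset.inter_comm]
      omega
    have hsum : Fintype.card U * Y.card
        ≤ ∑ v, (m v + (Fintype.card Z - (NB v).card)) := by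
      calc Fintype.card U * Y.card = ∑ _v : U, Y.card := by
            rw [Finset.sum_const, Finset.card_univ, smul_eq_mul]
        _ ≤ _ := Finset.sum_le_sum fun v _ => hper v
    rw [Finset.sum_add_distrib] at hsum
    omega
  calc ∏ v, (((NB v).card - m v).choose (t v) : ℝ) / ((NB v).card.choose (t v) : ℝ)
      ≤ (1 - q) ^ (∑ v, m v) := by rw [← step2]; exact step1
    _ ≤ (1 - q) ^
          (Fintype.card U * Y.card - ∑ v, (Fintype.card Z - (NB v).card)) :=
        pow_le_pow_of_le_one (by linarith) (by linarith) hE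
end

section
/- Let F be a bipartite graph on U ∪ V, let β, γ ∈ V be distinct, and let F' = F^{β,γ} be obtained from F by replacing N_F(β), N_F(γ) with N_F(β) ∪ N_F(γ), N_F(β) ∩ N_F(γ) respectively. For natural numbers t_v ≤ d_F(v) (v ∈ U), let L (resp. L') be the random subgraph of F (resp. F') obtained by choosing each N_L(v) uniformly from the t_v-subsets of N_F(v) (resp. N_{F'}(v)), independently over v. Then P(L' has a U-perfect matching) ≤ P(L has a U-perfect matching). -/
open Finset
namespace Stmt15Aux

variable {V : Type*} [DecidableEq V] {U : Type*}

-- copies from aux (will merge later)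
lemma mem_image_swap {s : Finset V} {β γ v : V} :
    v ∈ s.image (Equiv.swap β γ) ↔ Equiv.swap β γ v ∈ s := by
  constructor
  · intro h
    rcases Finset.mem_image.1 h with ⟨w, hw, rfl⟩
    simpa using hw
  · intro h
    exact Finset.mem_image.2 ⟨_, h, Equiv.swap_apply_self _ _ _⟩

def sigmaMap (NF : U → Finset V) (β γ : V) (f : U → Finset V) : U → Finset V :=
  fun u => if γ ∈ NF u ∧ β ∉ NF u then (f u).image (Equiv.swap β γ) else f u

def psiMap (NF : U → Finset V) (β γ : V) (f : U → Finset V) : U → Finset V :=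
  fun u => if β ∈ NF u ∧ γ ∈ NF u then (f u).image (Equiv.swap β γ) else f u

def tauMap (NF : U → Finset V) (β γ : V) (f : U → Finset V) : U → Finset V :=
  fun u => if γ ∈ NF u then (f u).image (Equiv.swap β γ) else f u

lemma reflTransGen_comparable {α : Type*} {r : α → α → Prop}
    (hdet : ∀ ⦃x y z⦄, r x y → r x z → y = z) :
    ∀ {u b c : α}, Relation.ReflTransGen r u b → Relation.ReflTransGen r u c →
      Relation.ReflTransGen r b c ∨ Relation.ReflTransGen r c b := by
  intro u b c h1
  induction h1 using Relation.ReflTransGen.head_induction_on with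
  | refl => exact fun h2 => Or.inl h2
  | head h h' ih =>
      intro h2
      rcases Relation.ReflTransGen.cases_head h2 with heq | ⟨z, hz, h2'⟩
      · subst heq
        exact Or.inr (Relation.ReflTransGen.head h h')
      · have hyz := hdet h hz
        subst hyz
        exact ih h2'

variable {β γ : V}

lemma star_lemma {NF NF' : U → Finset V} (hβγ : β ≠ γ)
    (hb : ∀ u, β ∈ NF' u → (β ∈ NF u ∨ γ ∈ NF u))
    (hg : ∀ u, γ ∈ NF' u → (β ∈ NF u ∧ γ ∈ NF u))
    {f : U → Finset V} (hfam : ∀ u, f u ⊆ NF' u)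
    {M : U → V} (hMinj : Function.Injective M) (hM : ∀ u, M u ∈ f u) :
    (∃ M' : U → V, Function.Injective M' ∧ ∀ u, M' u ∈ sigmaMap NF β γ f u) ∨
    (∃ M' : U → V, Function.Injective M' ∧ ∀ u, M' u ∈ tauMap NF β γ f u) := by
  have hγf : ∀ u, γ ∈ f u → β ∈ NF u ∧ γ ∈ NF u := fun u h => hg u (hfam u h)
  by_cases hc : ∃ u, M u = β ∧ β ∉ NF u
  · right
    obtain ⟨u0, hMu0, hβu0⟩ := hc
    have hγu0 : γ ∈ NF u0 := by
      rcases hb u0 (hfam u0 (hMu0 ▸ hM u0)) with h | h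
      · exact absurd h hβu0
      · exact h
    refine ⟨fun u => Equiv.swap β γ (M u), (Equiv.swap β γ).injective.comp hMinj, fun u => ?_⟩
    show Equiv.swap β γ (M u) ∈ tauMap NF β γ f u
    unfold tauMap
    split_ifs with hγu
    · rw [mem_image_swap, Equiv.swap_apply_self]
      exact hM u
    · have h1 : M u ≠ β := by
        intro h
        apply hγu
        have e1 : u = u0 := hMinj (by rw [h, hMu0])
        rw [e1]; exact hγu0
      have h2 : M u ≠ γ := fun h => hγu (hγf u (h ▸ hM u)).2
      rw [Equiv.swap_apply_of_ne_of_ne h1 h2]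
      exact hM u
  · left
    push_neg at hc
    refine ⟨M, hMinj, fun u => ?_⟩
    unfold sigmaMap
    split_ifs with h
    · have h1 : M u ≠ β := fun hh => h.2 (hc u hh)
      have h2 : M u ≠ γ := fun hh => h.2 (hγf u (hh ▸ hM u)).1
      rw [mem_image_swap, Equiv.swap_apply_of_ne_of_ne h1 h2]
      exact hM u
    · exact hM u

lemma claimC [DecidableEq U] {NF NF' : U → Finset V} (hβγ : β ≠ γ)
    (hb : ∀ u, β ∈ NF' u → (β ∈ NF u ∨ γ ∈ NF u))
    (hg : ∀ u, γ ∈ NF' u → (β ∈ NF u ∧ γ ∈ NF u))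
    {f : U → Finset V} (hfam : ∀ u, f u ⊆ NF' u)
    {M N : U → V} (hMinj : Function.Injective M) (hM : ∀ u, M u ∈ f u)
    (hNinj : Function.Injective N) (hN : ∀ u, N u ∈ psiMap NF β γ f u) :
    ∃ M' : U → V, Function.Injective M' ∧ ∀ u, M' u ∈ sigmaMap NF β γ f u := by
  classical
  have hγf : ∀ u, γ ∈ f u → β ∈ NF u ∧ γ ∈ NF u := fun u h => hg u (hfam u h)
  have hβf : ∀ u, β ∈ f u → β ∈ NF u ∨ γ ∈ NF u := fun u h => hb u (hfam u h)
  -- generic σ-membership helpers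
  have hσ_mem_id : ∀ u v, ¬(γ ∈ NF u ∧ β ∉ NF u) → v ∈ f u → v ∈ sigmaMap NF β γ f u := by
    intro u v h hv
    unfold sigmaMap
    rw [if_neg h]
    exact hv
  have hσ_mem_other : ∀ u (v : V), v ≠ β → v ≠ γ → v ∈ f u → v ∈ sigmaMap NF β γ f u := by
    intro u v h1 h2 hv
    unfold sigmaMap
    split_ifs
    · rw [mem_image_swap, Equiv.swap_apply_of_ne_of_ne h1 h2]; exact hv
    · exact hv
  -- ψ-membership helpers
  have hNmem : ∀ u, N u ≠ β → N u ≠ γ → N u ∈ f u := by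
    intro u h1 h2
    have hu := hN u
    unfold psiMap at hu
    split_ifs at hu with h
    · rw [mem_image_swap, Equiv.swap_apply_of_ne_of_ne h1 h2] at hu; exact hu
    · exact hu
  have hgeneric : ∀ u, N u ≠ β → N u ≠ γ → N u ∈ sigmaMap NF β γ f u := fun u h1 h2 =>
    hσ_mem_other u (N u) h1 h2 (hNmem u h1 h2)
  have hNγ : ∀ u, N u = γ → (β ∈ NF u ∧ γ ∈ NF u) ∧ β ∈ f u := by
    intro u h
    have hu := hN u
    unfold psiMap at hu
    split_ifs at hu with hcond
    · rw [h, mem_image_swap, Equiv.swap_apply_right] at hu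
      exact ⟨hcond, hu⟩
    · rw [h] at hu
      exact absurd (hγf u hu) hcond
  have hNβ : ∀ u, N u = β → γ ∉ NF u → β ∈ f u := by
    intro u h h2
    have hu := hN u
    unfold psiMap at hu
    rw [if_neg (fun hh => h2 hh.2), h] at hu
    exact hu
  by_cases hc1 : ∃ u, M u = β ∧ β ∉ NF u
  case neg =>
    push_neg at hc1
    refine ⟨M, hMinj, fun u => ?_⟩
    unfold sigmaMap
    split_ifs with h
    · have h1 : M u ≠ β := fun hh => h.2 (hc1 u hh)
      have h2 : M u ≠ γ := fun hh => h.2 (hγf u (hh ▸ hM u)).1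
      rw [mem_image_swap, Equiv.swap_apply_of_ne_of_ne h1 h2]
      exact hM u
    · exact hM u
  case pos =>
  obtain ⟨u0, hMu0, hβu0⟩ := hc1
  have hβfu0 : β ∈ f u0 := hMu0 ▸ hM u0
  have hγu0 : γ ∈ NF u0 := (hβf u0 hβfu0).resolve_left hβu0
  have hσu0 : γ ∈ sigmaMap NF β γ f u0 := by
    unfold sigmaMap
    rw [if_pos ⟨hγu0, hβu0⟩, mem_image_swap, Equiv.swap_apply_right]
    exact hβfu0
  by_cases hc2 : ∃ u, M u = γ
  case neg =>
    push_neg at hc2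
    refine ⟨Function.update M u0 γ, ?_, fun u => ?_⟩
    · intro x y hxy
      by_cases hx : x = u0 <;> by_cases hy : y = u0
      · rw [hx, hy]
      · rw [hx, Function.update_self, Function.update_of_ne hy] at hxy
        exact absurd hxy.symm (hc2 y)
      · rw [hy, Function.update_self, Function.update_of_ne hx] at hxy
        exact absurd hxy (hc2 x)
      · rw [Function.update_of_ne hx, Function.update_of_ne hy] at hxy
        exact hMinj hxy
    · by_cases hu : u = u0
      · rw [hu, Function.update_self]; exact hσu0
      · rw [Function.update_of_ne hu]
        have h1 : M u ≠ β := fun hh => hu (hMinj (by rw [hh, hMu0]))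
        exact hσ_mem_other u (M u) h1 (hc2 u) (hM u)
  case pos =>
  obtain ⟨u1, hMu1⟩ := hc2
  by_cases hc3 : ∃ u, N u = β ∧ γ ∉ NF u
  case neg =>
    push_neg at hc3
    refine ⟨fun u => Equiv.swap β γ (N u), (Equiv.swap β γ).injective.comp hNinj, fun u => ?_⟩
    show Equiv.swap β γ (N u) ∈ sigmaMap NF β γ f u
    by_cases h1 : N u = β
    · rw [h1, Equiv.swap_apply_left]
      have hγu : γ ∈ NF u := hc3 u h1
      by_cases h2 : β ∈ NF u
      · -- both: need γ ∈ f u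
        have hγfu : γ ∈ f u := by
          have hu := hN u
          unfold psiMap at hu
          rw [if_pos ⟨h2, hγu⟩, h1, mem_image_swap, Equiv.swap_apply_left] at hu
          exact hu
        exact hσ_mem_id u γ (fun hh => hh.2 h2) hγfu
      · -- γ-only
        have hβfu : β ∈ f u := by
          have hu := hN u
          unfold psiMap at hu
          rw [if_neg (fun hh => h2 hh.1), h1] at hu
          exact hu
        unfold sigmaMap
        rw [if_pos ⟨hγu, h2⟩, mem_image_swap, Equiv.swap_apply_right]
        exact hβfu
    · by_cases h2 : N u = γ
      · rw [h2, Equiv.swap_apply_right]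
        exact hσ_mem_id u β (fun hh => hh.2 (hNγ u h2).1.1) (hNγ u h2).2
      · rw [Equiv.swap_apply_of_ne_of_ne h1 h2]
        exact hgeneric u h1 h2
  case pos =>
  obtain ⟨a, hNa, hγa⟩ := hc3
  have hβfa : β ∈ f a := hNβ a hNa hγa
  by_cases hc4 : ∃ u, N u = γ
  case neg =>
    push_neg at hc4
    refine ⟨N, hNinj, fun u => ?_⟩
    by_cases h1 : N u = β
    · have hua : u = a := hNinj (by rw [h1, hNa])
      subst hua
      rw [h1]
      exact hσ_mem_id u β (fun hh => hγa hh.1) hβfa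
    · exact hgeneric u h1 (hc4 u)
  case pos =>
  obtain ⟨b, hNb⟩ := hc4
  have hbboth : β ∈ NF b ∧ γ ∈ NF b := (hNγ b hNb).1
  have hβfb : β ∈ f b := (hNγ b hNb).2
  set step : U → U → Prop := fun x y => N x = M y ∧ N x ≠ β ∧ N x ≠ γ with hstepdef
  set W : U → Prop := fun u => Relation.ReflTransGen step u1 u with hWdef
  have hdet : ∀ ⦃x y z⦄, step x y → step x z → y = z := fun x y z h1 h2 =>
    hMinj (h1.1.symm.trans h2.1)
  have hWu1 : W u1 := Relation.ReflTransGen.refl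
  have hWstep : ∀ x y, W x → N x = M y → N x ≠ β → N x ≠ γ → W y := fun x y hx h1 h2 h3 =>
    Relation.ReflTransGen.tail hx ⟨h1, h2, h3⟩
  have hnotboth : ¬ (W a ∧ W b) := by
    rintro ⟨ha, hb'⟩
    have hab : a ≠ b := fun h => hβγ (by rw [← hNa, h, hNb])
    rcases reflTransGen_comparable hdet ha hb' with h | h
    · rcases Relation.ReflTransGen.cases_head h with heq | ⟨z, hz, _⟩
      · exact hab heq
      · exact hz.2.1 hNa
    · rcases Relation.ReflTransGen.cases_head h with heq | ⟨z, hz, _⟩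
      · exact hab heq.symm
      · exact hz.2.2 hNb
  refine ⟨fun u => if u = u0 then γ else if W u then (if N u = γ then β else N u) else M u,
    ?_, ?_⟩
  · -- injectivity
    have hvalne : ∀ z, z ≠ u0 →
        (if W z then (if N z = γ then β else N z) else M z) ≠ γ := by
      intro z hz
      split_ifs with h1 h2
      · exact hβγ
      · exact h2
      · intro hMz
        apply h1
        have hzu1 : z = u1 := hMinj (by rw [hMz, hMu1])
        subst hzu1
        exact hWu1
    intro x y hxy
    simp only at hxy
    by_cases hx0 : x = u0 <;> by_cases hy0 : y = u0
    · rw [hx0, hy0]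
    · rw [if_pos hx0, if_neg hy0] at hxy
      exact absurd hxy.symm (hvalne y hy0)
    · rw [if_neg hx0, if_pos hy0] at hxy
      exact absurd hxy (hvalne x hx0)
    · rw [if_neg hx0, if_neg hy0] at hxy
      by_cases hWx : W x <;> by_cases hWy : W y
      · rw [if_pos hWx, if_pos hWy] at hxy
        by_cases hx1 : N x = γ <;> by_cases hy1 : N y = γ
        · exact hNinj (by rw [hx1, hy1])
        · rw [if_pos hx1, if_neg hy1] at hxy
          exfalso
          have hxb : x = b := hNinj (by rw [hx1, hNb])
          have hya : y = a := hNinj (by rw [← hxy, hNa])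
          exact hnotboth ⟨hya ▸ hWy, hxb ▸ hWx⟩
        · rw [if_neg hx1, if_pos hy1] at hxy
          exfalso
          have hyb : y = b := hNinj (by rw [hy1, hNb])
          have hxa : x = a := hNinj (by rw [hxy, hNa])
          exact hnotboth ⟨hxa ▸ hWx, hyb ▸ hWy⟩
        · rw [if_neg hx1, if_neg hy1] at hxy
          exact hNinj hxy
      · rw [if_pos hWx, if_neg hWy] at hxy
        exfalso
        by_cases hx1 : N x = γ
        · rw [if_pos hx1] at hxy
          exact hy0 (hMinj (by rw [← hxy, hMu0]))
        · rw [if_neg hx1] at hxy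
          by_cases hx2 : N x = β
          · rw [hx2] at hxy
            exact hy0 (hMinj (by rw [← hxy, hMu0]))
          · exact hWy (hWstep x y hWx hxy hx2 hx1)
      · rw [if_neg hWx, if_pos hWy] at hxy
        exfalso
        by_cases hy1 : N y = γ
        · rw [if_pos hy1] at hxy
          exact hx0 (hMinj (by rw [hxy, hMu0]))
        · rw [if_neg hy1] at hxy
          by_cases hy2 : N y = β
          · rw [hy2] at hxy
            exact hx0 (hMinj (by rw [hxy, hMu0]))
          · exact hWx (hWstep y x hWy hxy.symm hy2 hy1)
      · rw [if_neg hWx, if_neg hWy] at hxy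
        exact hMinj hxy
  · -- membership
    intro u
    simp only
    by_cases hu0 : u = u0
    · rw [if_pos hu0, hu0]; exact hσu0
    · rw [if_neg hu0]
      by_cases hWu : W u
      · rw [if_pos hWu]
        by_cases h1 : N u = γ
        · rw [if_pos h1]
          obtain rfl : u = b := hNinj (by rw [h1, hNb])
          exact hσ_mem_id u β (fun hh => hh.2 hbboth.1) hβfb
        · rw [if_neg h1]
          by_cases h2 : N u = β
          · obtain rfl : u = a := hNinj (by rw [h2, hNa])
            rw [h2]
            exact hσ_mem_id u β (fun hh => hγa hh.1) hβfa
          · exact hgeneric u h2 h1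
      · rw [if_neg hWu]
        have h1 : M u ≠ β := fun hh => hu0 (hMinj (by rw [hh, hMu0]))
        have h2 : M u ≠ γ := by
          intro hh
          apply hWu
          have huu1 : u = u1 := hMinj (by rw [hh, hMu1])
          subst huu1
          exact hWu1
        exact hσ_mem_other u (M u) h1 h2 (hM u)

lemma image_swap_swap' (s : Finset V) (β γ : V) :
    (s.image (Equiv.swap β γ)).image (Equiv.swap β γ) = s := by
  ext v
  rw [mem_image_swap, mem_image_swap, Equiv.swap_apply_self]

lemma image_swap_self {s : Finset V} {β γ : V} (hβ : β ∈ s) (hγ : γ ∈ s) :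
    s.image (Equiv.swap β γ) = s := by
  ext v
  rw [mem_image_swap, Equiv.swap_apply_def]
  split_ifs with h1 h2 <;> simp_all

section FamilyLemmas

variable {NF NF' : U → Finset V} {β γ : V}
  (hNF'eq : ∀ u, NF' u = if γ ∈ NF u then (NF u).image (Equiv.swap β γ) else NF u)
  {t : U → ℕ}

include hNF'eq

lemma sigmaMap_fam {f : U → Finset V} (hf : ∀ u, f u ⊆ NF' u ∧ (f u).card = t u) :
    ∀ u, sigmaMap NF β γ f u ⊆ NF u ∧ (sigmaMap NF β γ f u).card = t u := by
  intro u
  unfold sigmaMap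
  split_ifs with h
  · constructor
    · intro v hv
      rw [mem_image_swap] at hv
      have h2 := (hf u).1 hv
      rw [hNF'eq u, if_pos h.1, mem_image_swap] at h2
      simpa using h2
    · rw [Finset.card_image_of_injective _ (Equiv.injective _)]
      exact (hf u).2
  · refine ⟨?_, (hf u).2⟩
    by_cases hγu : γ ∈ NF u
    · have hβu : β ∈ NF u := by
        by_contra hb
        exact h ⟨hγu, hb⟩
      have heq : NF' u = NF u := by
        rw [hNF'eq u, if_pos hγu, image_swap_self hβu hγu]
      rw [← heq]
      exact (hf u).1
    · have heq : NF' u = NF u := by rw [hNF'eq u, if_neg hγu]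
      rw [← heq]
      exact (hf u).1

lemma tauMap_fam {f : U → Finset V} (hf : ∀ u, f u ⊆ NF' u ∧ (f u).card = t u) :
    ∀ u, tauMap NF β γ f u ⊆ NF u ∧ (tauMap NF β γ f u).card = t u := by
  intro u
  unfold tauMap
  split_ifs with h
  · constructor
    · intro v hv
      rw [mem_image_swap] at hv
      have h2 := (hf u).1 hv
      rw [hNF'eq u, if_pos h, mem_image_swap] at h2
      simpa using h2
    · rw [Finset.card_image_of_injective _ (Equiv.injective _)]
      exact (hf u).2
  · refine ⟨?_, (hf u).2⟩
    have heq : NF' u = NF u := by rw [hNF'eq u, if_neg h]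
    rw [← heq]
    exact (hf u).1

lemma sigmaMap_fam' {g : U → Finset V} (hg : ∀ u, g u ⊆ NF u ∧ (g u).card = t u) :
    ∀ u, sigmaMap NF β γ g u ⊆ NF' u ∧ (sigmaMap NF β γ g u).card = t u := by
  intro u
  unfold sigmaMap
  split_ifs with h
  · constructor
    · intro v hv
      rw [mem_image_swap] at hv
      rw [hNF'eq u, if_pos h.1, mem_image_swap]
      exact (hg u).1 hv
    · rw [Finset.card_image_of_injective _ (Equiv.injective _)]
      exact (hg u).2
  · refine ⟨?_, (hg u).2⟩
    by_cases hγu : γ ∈ NF u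
    · have hβu : β ∈ NF u := by
        by_contra hb
        exact h ⟨hγu, hb⟩
      have heq : NF' u = NF u := by
        rw [hNF'eq u, if_pos hγu, image_swap_self hβu hγu]
      rw [heq]
      exact (hg u).1
    · have heq : NF' u = NF u := by rw [hNF'eq u, if_neg hγu]
      rw [heq]
      exact (hg u).1

end FamilyLemmas

lemma sigmaMap_sigmaMap (NF : U → Finset V) (β γ : V) (f : U → Finset V) :
    sigmaMap NF β γ (sigmaMap NF β γ f) = f := by
  funext u
  unfold sigmaMap
  split_ifs with h
  · exact image_swap_swap' _ _ _
  · rfl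

lemma tauMap_tauMap (NF : U → Finset V) (β γ : V) (f : U → Finset V) :
    tauMap NF β γ (tauMap NF β γ f) = f := by
  funext u
  unfold tauMap
  split_ifs with h
  · exact image_swap_swap' _ _ _
  · rfl

lemma tauMap_eq (NF : U → Finset V) (β γ : V) (f : U → Finset V) :
    tauMap NF β γ f = sigmaMap NF β γ (psiMap NF β γ f) := by
  funext u
  unfold tauMap sigmaMap psiMap
  by_cases h1 : β ∈ NF u <;> by_cases h2 : γ ∈ NF u <;> simp [h1, h2]

end Stmt15Aux




open scoped Classical in
/-- The space of random sublists: each `u ∈ U` chooses a `t u`-subset of its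
neighborhood `NF u`. -/
noncomputable def sublistFamily {U V : Type*} [Fintype U] [Fintype V] [DecidableEq V]
    (NF : U → Finset V) (t : U → ℕ) : Finset (U → Finset V) :=
  Finset.univ.filter (fun f => ∀ u, f u ⊆ NF u ∧ (f u).card = t u)

open scoped Classical in
/-- The probability (uniform over `sublistFamily NF t`) that the random sublist
graph admits a `U`-perfect matching. -/
noncomputable def pmProb {U V : Type*} [Fintype U] [Fintype V] [DecidableEq V]
    (NF : U → Finset V) (t : U → ℕ) : ℝ :=
  (((sublistFamily NF t).filter
      (fun f => ∃ M : U → V, Function.Injective M ∧ ∀ u, M u ∈ f u)).card : ℝ) /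
    ((sublistFamily NF t).card : ℝ)

open scoped Classical in
/-- Switching lemma: replacing the neighborhoods of `β, γ` by their union and
intersection (the switch `F ↦ F^{β,γ}`) does not increase the probability that
the random sublist graph admits a `U`-perfect matching. -/
theorem stmt_15 {U V : Type*} [Fintype U] [Fintype V] [DecidableEq V]
    (F : U → V → Prop) (β γ : V) (hβγ : β ≠ γ)
    (NF : U → Finset V) (hNF : ∀ u v, v ∈ NF u ↔ F u v)
    (NF' : U → Finset V)
    (hNF' : ∀ u v, v ∈ NF' u ↔
      ((v = β ∧ (F u β ∨ F u γ)) ∨ (v = γ ∧ (F u β ∧ F u γ)) ∨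
        (v ≠ β ∧ v ≠ γ ∧ F u v)))
    (t : U → ℕ) (ht : ∀ u, t u ≤ (NF u).card) :
    pmProb NF' t ≤ pmProb NF t := by

  classical
  have hb' : ∀ u, β ∈ NF' u ↔ (β ∈ NF u ∨ γ ∈ NF u) := fun u => by
    simp [hNF', hNF, hβγ]
  have hg' : ∀ u, γ ∈ NF' u ↔ (β ∈ NF u ∧ γ ∈ NF u) := fun u => by
    simp [hNF', hNF, hβγ, Ne.symm hβγ]
  have ho' : ∀ u (v : V), v ≠ β → v ≠ γ → (v ∈ NF' u ↔ v ∈ NF u) := fun u v h1 h2 => by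
    simp [hNF', hNF, h1, h2]
  have hNF'eq : ∀ u, NF' u = if γ ∈ NF u then (NF u).image (Equiv.swap β γ) else NF u := by
    intro u
    ext v
    by_cases hγu : γ ∈ NF u
    · rw [if_pos hγu, Stmt15Aux.mem_image_swap, Equiv.swap_apply_def]
      split_ifs with h1 h2
      · subst h1; simp [hb', hγu]
      · subst h2; simp [hg', hγu]
      · exact ho' u v h1 h2
    · rw [if_neg hγu]
      by_cases h1 : v = β
      · subst h1; simp [hb', hγu]
      · by_cases h2 : v = γ
        · subst h2; simp [hg', hγu]
        · exact ho' u v h1 h2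
  have hmem : ∀ (NFx : U → Finset V) (f : U → Finset V),
      f ∈ sublistFamily NFx t ↔ ∀ u, f u ⊆ NFx u ∧ (f u).card = t u := by
    intro NFx f
    simp [sublistFamily, Finset.mem_filter]
  have hfamcard : (sublistFamily NF' t).card = (sublistFamily NF t).card := by
    refine Finset.card_bij' (fun f _ => Stmt15Aux.sigmaMap NF β γ f)
      (fun g _ => Stmt15Aux.sigmaMap NF β γ g) ?_ ?_ ?_ ?_
    · intro f hf
      exact (hmem NF _).2 (Stmt15Aux.sigmaMap_fam hNF'eq ((hmem NF' f).1 hf))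
    · intro g hg
      exact (hmem NF' _).2 (Stmt15Aux.sigmaMap_fam' hNF'eq ((hmem NF g).1 hg))
    · intro f _
      exact Stmt15Aux.sigmaMap_sigmaMap NF β γ f
    · intro g _
      exact Stmt15Aux.sigmaMap_sigmaMap NF β γ g
  have hb'' : ∀ u, β ∈ NF' u → (β ∈ NF u ∨ γ ∈ NF u) := fun u => (hb' u).1
  have hg'' : ∀ u, γ ∈ NF' u → (β ∈ NF u ∧ γ ∈ NF u) := fun u => (hg' u).1
  have hne : ∃ g : U → Finset V, g ∈ sublistFamily NF t := by
    have h : ∀ u, ∃ s : Finset V, s ⊆ NF u ∧ s.card = t u := fun u =>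
      Finset.exists_subset_card_eq (ht u)
    choose g hg1 hg2 using h
    exact ⟨g, (hmem NF g).2 (fun u => ⟨hg1 u, hg2 u⟩)⟩
  have hpos : (0:ℝ) < ((sublistFamily NF t).card : ℝ) := by
    obtain ⟨g, hgmem⟩ := hne
    exact_mod_cast Finset.card_pos.2 ⟨g, hgmem⟩
  unfold pmProb
  rw [hfamcard]
  rw [div_le_div_iff_of_pos_right hpos, Nat.cast_le]
  refine Finset.card_le_card_of_injOn
    (fun f => if ∃ M : U → V, Function.Injective M ∧ ∀ u, M u ∈ Stmt15Aux.sigmaMap NF β γ f u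
      then Stmt15Aux.sigmaMap NF β γ f else Stmt15Aux.tauMap NF β γ f) ?_ ?_
  · intro f hf
    rw [Finset.mem_coe, Finset.mem_filter] at hf ⊢
    obtain ⟨hf1, M, hMinj, hM⟩ := hf
    have hf1' := (hmem NF' f).1 hf1
    have hfamf : ∀ u, f u ⊆ NF' u := fun u => (hf1' u).1
    simp only
    split_ifs with h
    · exact ⟨(hmem NF _).2 (Stmt15Aux.sigmaMap_fam hNF'eq hf1'), h⟩
    · refine ⟨(hmem NF _).2 (Stmt15Aux.tauMap_fam hNF'eq hf1'), ?_⟩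
      rcases Stmt15Aux.star_lemma hβγ hb'' hg'' hfamf hMinj hM with h1 | h1
      · exact absurd h1 h
      · exact h1
  · intro f hf g hg hfg
    rw [Finset.mem_coe, Finset.mem_filter] at hf hg
    obtain ⟨hf1, hfP⟩ := hf
    obtain ⟨hg1, hgP⟩ := hg
    simp only at hfg
    by_cases h1 : (∃ M : U → V, Function.Injective M ∧ ∀ u, M u ∈ Stmt15Aux.sigmaMap NF β γ f u)
      <;> by_cases h2 : (∃ M : U → V, Function.Injective M ∧ ∀ u, M u ∈ Stmt15Aux.sigmaMap NF β γ g u)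
    · rw [if_pos h1, if_pos h2] at hfg
      have h3 := congrArg (Stmt15Aux.sigmaMap NF β γ) hfg
      rwa [Stmt15Aux.sigmaMap_sigmaMap, Stmt15Aux.sigmaMap_sigmaMap] at h3
    · rw [if_pos h1, if_neg h2, Stmt15Aux.tauMap_eq] at hfg
      exfalso
      have hfψg : f = Stmt15Aux.psiMap NF β γ g := by
        have h3 := congrArg (Stmt15Aux.sigmaMap NF β γ) hfg
        rwa [Stmt15Aux.sigmaMap_sigmaMap, Stmt15Aux.sigmaMap_sigmaMap] at h3
      obtain ⟨M, hMinj, hM⟩ := hgP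
      obtain ⟨N, hNinj, hN⟩ := hfP
      rw [hfψg] at hN
      exact h2 (Stmt15Aux.claimC hβγ hb'' hg''
        (fun u => ((hmem NF' g).1 hg1 u).1) hMinj hM hNinj hN)
    · rw [if_neg h1, if_pos h2, Stmt15Aux.tauMap_eq] at hfg
      exfalso
      have hgψf : g = Stmt15Aux.psiMap NF β γ f := by
        have h3 := congrArg (Stmt15Aux.sigmaMap NF β γ) hfg.symm
        rwa [Stmt15Aux.sigmaMap_sigmaMap, Stmt15Aux.sigmaMap_sigmaMap] at h3
      obtain ⟨M, hMinj, hM⟩ := hfP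
      obtain ⟨N, hNinj, hN⟩ := hgP
      rw [hgψf] at hN
      exact h1 (Stmt15Aux.claimC hβγ hb'' hg''
        (fun u => ((hmem NF' f).1 hf1 u).1) hMinj hM hNinj hN)
    · rw [if_neg h1, if_neg h2] at hfg
      have h3 := congrArg (Stmt15Aux.tauMap NF β γ) hfg
      rwa [Stmt15Aux.tauMap_tauMap, Stmt15Aux.tauMap_tauMap] at h3
end
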